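/- Let h ∈ ℕ and let f ∈ ℤ[[X]] be a formal power series of the form f = X^h · g where g has constant coefficient 1. Then there exists a unique sequence of integers c : {m ≥ 1} → ℤ such that f = X^h · ∏_{m ≥ 1} (1 − X^m)^{c(m)}, where the infinite product converges in the formal power series topology on ℤ[[X]] and (1 − X^m)^{c(m)} denotes the c(m)-th integer power of the unit 1 − X^m of ℤ[[X]]. -/

import Mathlib

/-!
The units congruent to 1 modulo `X^n` form a decreasing filtration `Kₙ` of `ℤ⟦X⟧ˣ`, and for
`n ≥ 1` the `n`-th coefficient is a homomorphism `Kₙ → ℤ` sending `(1 - X^n)^k` to `-k`. In the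
coefficientwise topology a product of factors `vₘ ∈ Kₘ` converges to `P` exactly when `P` agrees
with the `n`-th partial product modulo `X^(n+1)` for every `n`. So the exponents are forced one
degree at a time: once `g` is matched modulo `X^n`, the exponent of `1 - X^n` is the unique
integer that kills the `n`-th coefficient of the remaining quotient.
-/

open PowerSeries

/-- The product (`X`-adic) topology on ℤ[[X]]: the topology of coefficientwise
convergence, i.e. the product topology on `(Unit →₀ ℕ) → ℤ`. -/
noncomputable instance : TopologicalSpace (PowerSeries ℤ) :=
  inferInstanceAs (TopologicalSpace ((Unit →₀ ℕ) → ℤ))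

theorem isUnit_one_sub_X_pow (m : ℕ) (hm : m ≠ 0) :
    IsUnit (1 - PowerSeries.X ^ m : PowerSeries ℤ) := by
  rw [PowerSeries.isUnit_iff_constantCoeff]
  simp [zero_pow hm]

/-- `1 - X^m` as a unit of ℤ[[X]], for `m ≥ 1`. -/
noncomputable def oneSubXPow (m : {m : ℕ // 1 ≤ m}) : (PowerSeries ℤ)ˣ :=
  (isUnit_one_sub_X_pow m.1 (Nat.one_le_iff_ne_zero.mp m.2)).unit

open Filter

namespace PowerSeries

section UnitsCongrOne

variable {R : Type*} [CommRing R]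

noncomputable def unitsCongrOne (n : ℕ) : Subgroup R⟦X⟧ˣ :=
  (Units.map (Ideal.Quotient.mk (Ideal.span {(X : R⟦X⟧) ^ n})).toMonoidHom).ker

theorem mem_unitsCongrOne {n : ℕ} {u : R⟦X⟧ˣ} :
    u ∈ unitsCongrOne n ↔ X ^ n ∣ (u : R⟦X⟧) - 1 := by
  rw [unitsCongrOne, MonoidHom.mem_ker, Units.ext_iff, ← Ideal.mem_span_singleton]
  exact Ideal.Quotient.eq

theorem unitsCongrOne_anti : Antitone (unitsCongrOne (R := R)) :=
  fun _ _ hkn _ hu => mem_unitsCongrOne.2 <| (pow_dvd_pow X hkn).trans (mem_unitsCongrOne.1 hu)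

theorem inv_mul_mem_unitsCongrOne_iff {n : ℕ} {a b : R⟦X⟧ˣ} :
    a⁻¹ * b ∈ unitsCongrOne n ↔ X ^ n ∣ (b : R⟦X⟧) - (a : R⟦X⟧) := by
  rw [mem_unitsCongrOne, ← Units.dvd_mul_left (u := a)]
  congr! 1
  rw [Units.val_mul, mul_sub, ← mul_assoc, Units.mul_inv, one_mul, mul_one]

theorem mem_unitsCongrOne_succ_iff {n : ℕ} (hn : n ≠ 0) {u : R⟦X⟧ˣ} :
    u ∈ unitsCongrOne (n + 1) ↔ u ∈ unitsCongrOne n ∧ coeff n (u : R⟦X⟧) = 0 := by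
  simp only [mem_unitsCongrOne, X_pow_dvd_iff, Nat.lt_succ_iff_lt_or_eq, or_imp, forall_and,
    forall_eq, map_sub, coeff_one, hn, if_false, sub_zero]

theorem coeff_mul_of_mem_unitsCongrOne {n : ℕ} (hn : n ≠ 0) {a b : R⟦X⟧ˣ}
    (ha : a ∈ unitsCongrOne n) (hb : b ∈ unitsCongrOne n) :
    coeff n ((a * b : R⟦X⟧ˣ) : R⟦X⟧) = coeff n (a : R⟦X⟧) + coeff n (b : R⟦X⟧) := by
  have hprod : X ^ (n + n) ∣ ((a : R⟦X⟧) - 1) * ((b : R⟦X⟧) - 1) :=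
    pow_add (X : R⟦X⟧) n n ▸ mul_dvd_mul (mem_unitsCongrOne.1 ha) (mem_unitsCongrOne.1 hb)
  have hzero := X_pow_dvd_iff.1 hprod n (by omega)
  rw [show ((a : R⟦X⟧) - 1) * ((b : R⟦X⟧) - 1) = a * b - a - b + 1 by ring] at hzero
  simpa [coeff_one, hn, sub_eq_zero, sub_sub] using hzero

noncomputable def unitsCongrOneCoeff (n : ℕ) (hn : n ≠ 0) :
    unitsCongrOne (R := R) n →* Multiplicative R where
  toFun a := Multiplicative.ofAdd (coeff (R := R) n (a : R⟦X⟧ˣ))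
  map_one' := by simp [coeff_one, hn]
  map_mul' a b := by
    rw [← ofAdd_add]
    exact congrArg _ (coeff_mul_of_mem_unitsCongrOne hn a.2 b.2)

theorem coeff_zpow_of_mem_unitsCongrOne {n : ℕ} (hn : n ≠ 0) {a : R⟦X⟧ˣ}
    (ha : a ∈ unitsCongrOne n) (k : ℤ) :
    coeff n ((a ^ k : R⟦X⟧ˣ) : R⟦X⟧) = k • coeff n (a : R⟦X⟧) :=
  congrArg Multiplicative.toAdd (map_zpow (unitsCongrOneCoeff (R := R) n hn) ⟨a, ha⟩ k)

end UnitsCongrOne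

section PartialProducts

def posUpTo (n : ℕ) : Finset {m : ℕ // 1 ≤ m} :=
  (Finset.range (n + 1)).subtype (1 ≤ ·)

theorem mem_posUpTo {n : ℕ} {m : {m : ℕ // 1 ≤ m}} : m ∈ posUpTo n ↔ m.1 ≤ n := by
  simp [posUpTo]

theorem posUpTo_mono : Monotone posUpTo :=
  fun _ _ hkn _ hm => mem_posUpTo.2 ((mem_posUpTo.1 hm).trans hkn)

theorem posUpTo_zero : posUpTo 0 = ∅ :=
  Finset.eq_empty_of_forall_notMem fun m hm => by have := m.2; have := mem_posUpTo.1 hm; omega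

theorem posUpTo_succ (n : ℕ) :
    posUpTo (n + 1) = Finset.cons ⟨n + 1, Nat.le_add_left 1 n⟩ (posUpTo n)
      (by simp [mem_posUpTo]) := by
  ext m
  simp only [Finset.mem_cons, mem_posUpTo, Subtype.ext_iff]
  omega

variable {R : Type*} [CommRing R] {v : {m : ℕ // 1 ≤ m} → R⟦X⟧ˣ}

theorem prod_mem_unitsCongrOne (hv : ∀ m, v m ∈ unitsCongrOne m.1) {n : ℕ}
    {s : Finset {m : ℕ // 1 ≤ m}} (hs : ∀ m ∈ s, n ≤ m.1) :
    ∏ m ∈ s, v m ∈ unitsCongrOne n :=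
  Subgroup.prod_mem _ fun m hm => unitsCongrOne_anti (hs m hm) (hv m)

theorem X_pow_dvd_prod_sub_prod_posUpTo (hv : ∀ m, v m ∈ unitsCongrOne m.1) {n : ℕ}
    {s : Finset {m : ℕ // 1 ≤ m}} (hs : posUpTo n ⊆ s) :
    X ^ (n + 1) ∣ ∏ m ∈ s, (v m : R⟦X⟧) - ∏ m ∈ posUpTo n, (v m : R⟦X⟧) := by
  have hrest : ∏ m ∈ s \ posUpTo n, v m ∈ unitsCongrOne (n + 1) :=
    prod_mem_unitsCongrOne hv fun m hm => by
      have := mem_posUpTo.not.1 (Finset.mem_sdiff.1 hm).2; omega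
  rw [eq_inv_mul_of_mul_eq (c := ∏ m ∈ s, v m) ((mul_comm _ _).trans (Finset.prod_sdiff hs)),
    inv_mul_mem_unitsCongrOne_iff] at hrest
  simpa only [Units.coe_prod] using hrest

open scoped PowerSeries.WithPiTopology in
theorem hasProd_iff_forall_X_pow_dvd [TopologicalSpace R] [T2Space R]
    (hv : ∀ m, v m ∈ unitsCongrOne m.1) {P : R⟦X⟧} :
    HasProd (fun m => (v m : R⟦X⟧)) P ↔
      ∀ n, X ^ (n + 1) ∣ P - ∏ m ∈ posUpTo n, (v m : R⟦X⟧) := by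
  have hcoeff {k n : ℕ} (hkn : k ≤ n) {s} (hs : posUpTo n ⊆ s) :
      coeff k (∏ m ∈ s, (v m : R⟦X⟧)) = coeff k (∏ m ∈ posUpTo n, (v m : R⟦X⟧)) := by
    rw [← sub_eq_zero, ← map_sub]
    exact X_pow_dvd_iff.1 (X_pow_dvd_prod_sub_prod_posUpTo hv hs) k (by omega)
  have hlim (n : ℕ) : Tendsto (fun s => coeff n (∏ m ∈ s, (v m : R⟦X⟧))) atTop
      (nhds (coeff n (∏ m ∈ posUpTo n, (v m : R⟦X⟧)))) :=
    tendsto_const_nhds.congr' <|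
      (eventually_ge_atTop (posUpTo n)).mono fun s hs => (hcoeff le_rfl hs).symm
  rw [HasProd, SummationFilter.unconditional_filter, WithPiTopology.tendsto_iff_coeff_tendsto]
  refine ⟨fun h n => X_pow_dvd_iff.2 fun k hk => ?_, fun h n => ?_⟩
  · rw [map_sub, sub_eq_zero, tendsto_nhds_unique (h k) (hlim k),
      hcoeff le_rfl (posUpTo_mono (by omega : k ≤ n))]
  · convert hlim n using 2
    exact sub_eq_zero.1 (by simpa only [map_sub] using X_pow_dvd_iff.1 (h n) n n.lt_succ_self)

end PartialProducts

end PowerSeries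

theorem coe_oneSubXPow (m : {m : ℕ // 1 ≤ m}) : (oneSubXPow m : ℤ⟦X⟧) = 1 - X ^ m.1 :=
  IsUnit.unit_spec _

theorem oneSubXPow_mem_unitsCongrOne (m : {m : ℕ // 1 ≤ m}) :
    oneSubXPow m ∈ unitsCongrOne m.1 := by
  rw [mem_unitsCongrOne, coe_oneSubXPow, sub_sub_cancel_left, dvd_neg]

theorem coeff_oneSubXPow_zpow (m : {m : ℕ // 1 ≤ m}) (k : ℤ) :
    coeff m.1 ((oneSubXPow m ^ k : ℤ⟦X⟧ˣ) : ℤ⟦X⟧) = -k := by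
  have hm : m.1 ≠ 0 := Nat.one_le_iff_ne_zero.1 m.2
  rw [coeff_zpow_of_mem_unitsCongrOne hm (oneSubXPow_mem_unitsCongrOne m), coe_oneSubXPow]
  simp [coeff_one, hm]

theorem mul_oneSubXPow_zpow_coeff_mem {n : ℕ} (hn : 1 ≤ n) {a : ℤ⟦X⟧ˣ}
    (ha : a ∈ unitsCongrOne n) :
    a * oneSubXPow ⟨n, hn⟩ ^ coeff n (a : ℤ⟦X⟧) ∈ unitsCongrOne (n + 1) := by
  have hn' : n ≠ 0 := Nat.one_le_iff_ne_zero.1 hn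
  have hpow := zpow_mem (oneSubXPow_mem_unitsCongrOne ⟨n, hn⟩) (coeff n (a : ℤ⟦X⟧))
  rw [mem_unitsCongrOne_succ_iff hn', coeff_mul_of_mem_unitsCongrOne hn' ha hpow]
  exact ⟨mul_mem ha hpow, by rw [coeff_oneSubXPow_zpow ⟨n, hn⟩]; exact add_neg_cancel _⟩

noncomputable def eulerRemainder (g : ℤ⟦X⟧ˣ) : ℕ → ℤ⟦X⟧ˣ
  | 0 => g
  | n + 1 => eulerRemainder g n *
      oneSubXPow ⟨n + 1, Nat.le_add_left 1 n⟩ ^ coeff (n + 1) (eulerRemainder g n : ℤ⟦X⟧)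

noncomputable def eulerExponent (g : ℤ⟦X⟧ˣ) (m : {m : ℕ // 1 ≤ m}) : ℤ :=
  -coeff m.1 (eulerRemainder g (m.1 - 1) : ℤ⟦X⟧)

theorem eulerRemainder_mem {g : ℤ⟦X⟧ˣ} (hg : constantCoeff (g : ℤ⟦X⟧) = 1) (n : ℕ) :
    eulerRemainder g n ∈ unitsCongrOne (n + 1) := by
  induction n with
  | zero => simp [mem_unitsCongrOne, eulerRemainder, X_dvd_iff, hg]
  | succ n ih => exact mul_oneSubXPow_zpow_coeff_mem (Nat.le_add_left 1 n) ih

theorem eulerRemainder_mul_prod (g : ℤ⟦X⟧ˣ) (n : ℕ) :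
    eulerRemainder g n * ∏ m ∈ posUpTo n, oneSubXPow m ^ eulerExponent g m = g := by
  induction n with
  | zero => simp [eulerRemainder, posUpTo_zero]
  | succ n ih =>
    rw [posUpTo_succ, Finset.prod_cons, eulerRemainder, eulerExponent, zpow_neg]
    simpa only [Nat.add_sub_cancel, mul_assoc, mul_inv_cancel_left] using ih

theorem hasProd_eulerExponent {g : ℤ⟦X⟧ˣ} (hg : constantCoeff (g : ℤ⟦X⟧) = 1) :
    HasProd (fun m => ((oneSubXPow m ^ eulerExponent g m : ℤ⟦X⟧ˣ) : ℤ⟦X⟧)) g := by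
  refine (hasProd_iff_forall_X_pow_dvd fun m =>
    zpow_mem (oneSubXPow_mem_unitsCongrOne m) _).2 fun n => ?_
  rw [← Units.coe_prod, ← inv_mul_mem_unitsCongrOne_iff,
    ← eq_inv_mul_of_mul_eq ((mul_comm _ _).trans (eulerRemainder_mul_prod g n))]
  exact eulerRemainder_mem hg n

theorem eq_zero_of_forall_prod_oneSubXPow_zpow_mem {d : {m : ℕ // 1 ≤ m} → ℤ}
    (hd : ∀ n, ∏ m ∈ posUpTo n, oneSubXPow m ^ d m ∈ unitsCongrOne (n + 1)) : d = 0 := by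
  have hvanish (n : ℕ) : ∀ m ∈ posUpTo n, d m = 0 := by
    induction n with
    | zero => simp [posUpTo_zero]
    | succ n ih =>
      have htop := hd (n + 1)
      rw [posUpTo_succ, Finset.prod_cons,
        Finset.prod_eq_one fun m hm => by rw [ih m hm, zpow_zero], mul_one,
        mem_unitsCongrOne_succ_iff n.succ_ne_zero, coeff_oneSubXPow_zpow ⟨n + 1, _⟩,
        neg_eq_zero] at htop
      simpa [posUpTo_succ, htop.2] using ih
  exact funext fun m => hvanish m.1 m (mem_posUpTo.2 le_rfl)

theorem eq_of_hasProd_oneSubXPow_zpow {c c' : {m : ℕ // 1 ≤ m} → ℤ} {P : ℤ⟦X⟧}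
    (hc : HasProd (fun m => ((oneSubXPow m ^ c m : ℤ⟦X⟧ˣ) : ℤ⟦X⟧)) P)
    (hc' : HasProd (fun m => ((oneSubXPow m ^ c' m : ℤ⟦X⟧ˣ) : ℤ⟦X⟧)) P) : c = c' := by
  have hmem (c : {m : ℕ // 1 ≤ m} → ℤ) (m : {m : ℕ // 1 ≤ m}) :
      oneSubXPow m ^ c m ∈ unitsCongrOne m.1 :=
    zpow_mem (oneSubXPow_mem_unitsCongrOne m) _
  have hquot (n : ℕ) : ∏ m ∈ posUpTo n, oneSubXPow m ^ (c' - c) m ∈ unitsCongrOne (n + 1) := by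
    have hdvd := dvd_sub ((hasProd_iff_forall_X_pow_dvd (hmem c)).1 hc n)
      ((hasProd_iff_forall_X_pow_dvd (hmem c')).1 hc' n)
    rw [sub_sub_sub_cancel_left, ← Units.coe_prod, ← Units.coe_prod,
      ← inv_mul_mem_unitsCongrOne_iff, ← Finset.prod_inv_distrib, ← Finset.prod_mul_distrib] at hdvd
    simpa only [Pi.sub_apply, zpow_sub, mul_comm] using hdvd
  exact (sub_eq_zero.1 (eq_zero_of_forall_prod_oneSubXPow_zpow_mem hquot)).symm

theorem stmt4 (h : ℕ) (f g : PowerSeries ℤ)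
    (hg : PowerSeries.constantCoeff g = 1)
    (hf : f = PowerSeries.X ^ h * g) :
    ∃! c : {m : ℕ // 1 ≤ m} → ℤ,
      ∃ P : PowerSeries ℤ,
        HasProd (fun m : {m : ℕ // 1 ≤ m} =>
          ((oneSubXPow m ^ c m : (PowerSeries ℤ)ˣ) : PowerSeries ℤ)) P ∧
        f = PowerSeries.X ^ h * P := by
  obtain ⟨u, rfl⟩ := isUnit_iff_constantCoeff.2 (hg ▸ isUnit_one : IsUnit (constantCoeff g))
  subst hf
  refine ⟨eulerExponent u, ⟨u, hasProd_eulerExponent hg, rfl⟩, ?_⟩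
  rintro c ⟨P, hP, hXP⟩
  have hPu : P = u := (mul_left_cancel₀ (pow_ne_zero h X_ne_zero) hXP).symm
  exact eq_of_hasProd_oneSubXPow_zpow hP (hPu ▸ hasProd_eulerExponent hg)
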